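/- Local-global agreement of the priority update: suppose for an edge {j,k} ∈ E with k the m-th neighbour of j and j the n-th neighbour of k, the local dominance bits satisfy d⃗_j(m) = true and d⃗_k(n) = false iff j ↦ k ∈ D, and the local activity inputs agree with the global activity map (a⃗_j(0) = ā(j), a⃗_j(m) = ā(k), etc.), and ā is safe. Then after one update, j ↦ k ∈ d_H(D, ā) iff d_L(d⃗_j(m), ā(j), ā(k)) = true and d_L(d⃗_k(n), ā(k), ā(j)) = false. -/
import Mathlib


inductive Act : Type
  | t | h | e
deriving DecidableEq, Repr

def switch : Act → Act
  | Act.t => Act.h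
  | Act.h => Act.e
  | Act.e => Act.t

def fP (a : Act) (b : Bool) : Act := if b then switch a else a

inductive Cmd : Type
  | pass | force (b : Bool)
deriving DecidableEq

def fS (a : Act) (b : Bool) : Cmd → Act
  | Cmd.pass => fP a b
  | Cmd.force b' => fP a b'

/-- The updated priority relation `dH D a`: edge `j ↦ k` of `D` is reversed when
`a j = e`, or when `a j = t` and `a k = h`; otherwise kept. -/
def dH {V : Type*} (D : V → V → Prop) (a : V → Act) : V → V → Prop :=
  fun j k =>
    (D j k ∧ ¬ (a j = Act.e ∨ (a j = Act.t ∧ a k = Act.h))) ∨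
    (D k j ∧ (a k = Act.e ∨ (a k = Act.t ∧ a j = Act.h)))

/-- `D` is a priority map for `E`: it orients each edge of `E` exactly one way. -/
def IsPriorityMap {V : Type*} (E D : V → V → Prop) : Prop :=
  (∀ j k, D j k → E j k) ∧ (∀ j k, E j k → (D j k ↔ ¬ D k j))

def topD {V : Type*} (E D : V → V → Prop) (j : V) : Prop := ∀ k, E j k → D j k

def ready {V : Type*} (E D : V → V → Prop) (a : V → Act) (j : V) : Prop :=
  a j = Act.h ∧ topD E D j ∧ ∀ k, E j k → a k ≠ Act.e

open scoped Classical in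
noncomputable def gH {V : Type*} (E D : V → V → Prop) (a : V → Act) (j : V) : Cmd :=
  if a j = Act.t ∨ a j = Act.e then Cmd.pass
  else if ready E D a j then Cmd.force true else Cmd.force false

/-- One step of the polled dynamics of the philosophers under the hub controller. -/
noncomputable def nextA {V : Type*} (E D : V → V → Prop) (a : V → Act) (b : V → Bool) :
    V → Act :=
  fun j => fS (a j) (b j) (gH E D a j)

def safe {V : Type*} (E : V → V → Prop) (a : V → Act) : Prop :=
  ∀ j k, E j k → ¬ (a j = Act.e ∧ a k = Act.e)

def Acyclic {V : Type*} (D : V → V → Prop) : Prop :=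
  ∀ j, ¬ Relation.TransGen D j j

/-- The local dominance-bit update function. -/
def dL (d : Bool) : Act → Act → Bool
  | Act.t, Act.t => d
  | Act.t, Act.h => false
  | Act.t, Act.e => true
  | Act.h, Act.e => true
  | Act.h, Act.h => d
  | Act.e, Act.h => false
  | Act.e, Act.t => false
  | Act.h, Act.t => true
  | Act.e, Act.e => d

theorem local_global_priority_update {V : Type*} (E D : V → V → Prop)
    (hE_symm : ∀ j k, E j k → E k j) (hD : IsPriorityMap E D)
    (a : V → Act) (hsafe : safe E a)
    (j k : V) (hjk : E j k)
    (dj dk : Bool)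
    (hbits : (dj = true ∧ dk = false) ↔ D j k)
    (hcompat : dj = !dk) :
    (dH D a j k ↔ (dL dj (a j) (a k) = true ∧ dL dk (a k) (a j) = false)) := by
  have hDD := hD.2 j k hjk
  have hne := hsafe j k hjk
  have hDjk : D j k ↔ dj = true := by
    rw [← hbits]
    cases dj <;> cases dk <;> first | exact absurd hcompat (by decide) | decide
  have hDkj : D k j ↔ dk = true := by
    have h2 : D k j ↔ ¬ D j k := by rw [hDD]; exact not_not.symm
    rw [h2, hDjk]
    cases dj <;> cases dk <;> first | exact absurd hcompat (by decide) | decide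
  clear hbits hDD
  cases hj : a j <;> cases hk : a k <;> cases dj <;> cases dk <;>
    first
    | exact absurd hcompat (by decide)
    | exact absurd (And.intro hj hk) hne
    | (simp only [dH, hj, hk, dL, hDjk, hDkj]; decide)
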